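/- (The constructed surface has parallel normalized mean curvature vector field in canonical parameters.) Let 𝓕 : D → Mat₄ₓ₄(ℝ) be a C¹ map with rows x, y, n₁, n₂ : D → ℝ⁴ satisfying ∂_u 𝓕 = A·𝓕 and ∂_v 𝓕 = B·𝓕 on D, and suppose 𝓕(p)·η·𝓕(p)ᵀ = G₀ for all p ∈ D (the rows form a pseudo-orthonormal frame at every point). Let z : D → ℝ⁴ be a C² map with z_u = x/√|μ| and z_v = y/√|μ|. Then on D: ⟨z_u, z_u⟩ = 0, ⟨z_v, z_v⟩ = 0, ⟨z_u, z_v⟩ = −1/|μ| (so z is a timelike surface and (u,v) are canonical isotropic parameters with metric function f = 1/√|μ|); z_uv = −(ν/|μ|)·n₁, so the mean curvature vector H := −(⟨|μ|·z_uv, n₁⟩·n₁ + ⟨|μ|·z_uv, n₂⟩·n₂) equals ν·n₁; and ⟨∂_u n₁, n₂⟩ = 0 and ⟨∂_v n₁, n₂⟩ = 0, i.e. n₁ is parallel in the normal bundle. -/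

import Mathlib

noncomputable section

/-- ℝ⁴ as the space of quadruples of reals. -/
abbrev V4 := Fin 4 → ℝ

/-- The Minkowski inner product of signature (3,1) on ℝ⁴. -/
def mink (p q : V4) : ℝ := p 0 * q 0 + p 1 * q 1 + p 2 * q 2 - p 3 * q 3

/-- Partial derivative with respect to the first coordinate `u` of `ℝ × ℝ`. -/
def pu {E : Type*} [NormedAddCommGroup E] [NormedSpace ℝ E]
    (g : ℝ × ℝ → E) (p : ℝ × ℝ) : E := fderiv ℝ g p (1, 0)

/-- Partial derivative with respect to the second coordinate `v` of `ℝ × ℝ`. -/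
def pv {E : Type*} [NormedAddCommGroup E] [NormedSpace ℝ E]
    (g : ℝ × ℝ → E) (p : ℝ × ℝ) : E := fderiv ℝ g p (0, 1)

lemma mink_smul_smul (a b : ℝ) (w v : V4) : mink (a • w) (b • v) = a * b * mink w v := by
  simp [mink]; ring

lemma mink_smul_left (a : ℝ) (w v : V4) : mink (a • w) v = a * mink w v := by
  simp [mink]; ring

/-- The constructed surface has parallel normalized mean curvature vector
field in canonical parameters.  If the rows `x, y, n₁, n₂` of a C¹ solution `𝓕` of the
frame system form a pseudo-orthonormal frame at every point and `z_u = x/√|μ|`,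
`z_v = y/√|μ|`, then `(u,v)` are canonical isotropic parameters
(`⟨z_u,z_u⟩ = ⟨z_v,z_v⟩ = 0`, `⟨z_u,z_v⟩ = −1/|μ|`, metric function `f = 1/√|μ|`),
`z_uv = −(ν/|μ|)n₁` so the mean curvature vector equals `ν·n₁`, and `n₁` is parallel
in the normal bundle. -/
theorem constructed_surface_has_parallel_normalized_mcv
    (D : Set (ℝ × ℝ)) (hD : IsOpen D)
    (lam μ ν : ℝ × ℝ → ℝ)
    (hlam : ContDiffOn ℝ (⊤ : ℕ∞) lam D) (hμ : ContDiffOn ℝ (⊤ : ℕ∞) μ D) (hν : ContDiffOn ℝ (⊤ : ℕ∞) ν D)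
    (hμne : ∀ p ∈ D, μ p ≠ 0)
    (γ₁ γ₂ : ℝ × ℝ → ℝ)
    (hγ₁ : ∀ p ∈ D, γ₁ p = -(pu (fun q => Real.sqrt |μ q|) p))
    (hγ₂ : ∀ p ∈ D, γ₂ p = -(pv (fun q => Real.sqrt |μ q|) p))
    (ε : ℝ) (hε : ε = 1 ∨ ε = -1)
    (A B : ℝ × ℝ → Matrix (Fin 4) (Fin 4) ℝ)
    (hA : ∀ p ∈ D, A p = (Real.sqrt |μ p|)⁻¹ •
      !![γ₁ p, 0, lam p, μ p;
         0, -γ₁ p, -ν p, 0;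
         -ν p, lam p, 0, 0;
         0, μ p, 0, 0])
    (hB : ∀ p ∈ D, B p = (Real.sqrt |μ p|)⁻¹ •
      !![-γ₂ p, 0, -ν p, 0;
         0, γ₂ p, -ε * lam p, -ε * μ p;
         -ε * lam p, -ν p, 0, 0;
         -ε * μ p, 0, 0, 0])
    (η G₀ : Matrix (Fin 4) (Fin 4) ℝ)
    (hη : η = Matrix.diagonal ![1, 1, 1, -1])
    (hG₀ : G₀ = !![0, -1, 0, 0;
                   -1, 0, 0, 0;
                   0, 0, 1, 0;
                   0, 0, 0, 1])
    (F : ℝ × ℝ → Matrix (Fin 4) (Fin 4) ℝ)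
    (hFC1 : ∀ i j : Fin 4, ContDiffOn ℝ 1 (fun q => F q i j) D)
    (hFu : ∀ p ∈ D, ∀ i j : Fin 4, pu (fun q => F q i j) p = (A p * F p) i j)
    (hFv : ∀ p ∈ D, ∀ i j : Fin 4, pv (fun q => F q i j) p = (B p * F p) i j)
    -- the rows of 𝓕 form a pseudo-orthonormal frame at every point of D
    (hframe : ∀ p ∈ D, F p * η * (F p).transpose = G₀)
    -- x, y, n₁, n₂ are the rows of 𝓕
    (x y n₁ n₂ : ℝ × ℝ → V4)
    (hxrow : ∀ p, x p = F p 0) (hyrow : ∀ p, y p = F p 1)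
    (hn₁row : ∀ p, n₁ p = F p 2) (hn₂row : ∀ p, n₂ p = F p 3)
    -- z is a C² map with z_u = x/√|μ| and z_v = y/√|μ|
    (z : ℝ × ℝ → V4) (hz : ContDiffOn ℝ 2 z D)
    (hzu : ∀ p ∈ D, pu z p = (Real.sqrt |μ p|)⁻¹ • x p)
    (hzv : ∀ p ∈ D, pv z p = (Real.sqrt |μ p|)⁻¹ • y p) :
    ∀ p ∈ D,
      -- canonical isotropic parameters
      mink (pu z p) (pu z p) = 0 ∧
      mink (pv z p) (pv z p) = 0 ∧
      mink (pu z p) (pv z p) = -(1 / |μ p|) ∧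
      -- z_uv = −(ν/|μ|)·n₁
      pv (pu z) p = (-(ν p / |μ p|)) • n₁ p ∧
      -- the mean curvature vector H equals ν·n₁
      -(mink (|μ p| • pv (pu z) p) (n₁ p) • n₁ p
          + mink (|μ p| • pv (pu z) p) (n₂ p) • n₂ p) = ν p • n₁ p ∧
      -- n₁ is parallel in the normal bundle
      mink (pu n₁ p) (n₂ p) = 0 ∧
      mink (pv n₁ p) (n₂ p) = 0 := by
  intro p hp
  set sf : ℝ × ℝ → ℝ := fun q => Real.sqrt |μ q| with hsf
  have hμp : μ p ≠ 0 := hμne p hp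
  have habs_pos : 0 < |μ p| := abs_pos.2 hμp
  have hs_pos : 0 < sf p := Real.sqrt_pos.2 habs_pos
  have hs_ne : sf p ≠ 0 := ne_of_gt hs_pos
  have hs_sq : sf p ^ 2 = |μ p| := Real.sq_sqrt (abs_nonneg _)
  -- Gram relations
  have gram : ∀ i j : Fin 4, mink (F p i) (F p j) = G₀ i j := by
    intro i j
    have h := congrFun (congrFun (hframe p hp) i) j
    simp [Matrix.mul_apply, Matrix.transpose_apply, hη, Matrix.diagonal_apply,
      Fin.sum_univ_four] at h
    simp only [mink]
    linarith [h]
  have gxx : mink (x p) (x p) = 0 := by rw [hxrow]; rw [gram 0 0, hG₀]; norm_num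
  have gyy : mink (y p) (y p) = 0 := by rw [hyrow]; rw [gram 1 1, hG₀]; norm_num
  have gxy : mink (x p) (y p) = -1 := by rw [hxrow, hyrow]; rw [gram 0 1, hG₀]; norm_num
  have gn11 : mink (n₁ p) (n₁ p) = 1 := by rw [hn₁row]; rw [gram 2 2, hG₀]; norm_num; rfl
  have gn12 : mink (n₁ p) (n₂ p) = 0 := by rw [hn₁row, hn₂row]; rw [gram 2 3, hG₀]; norm_num; rfl
  -- differentiability
  have hdiffF : ∀ i j : Fin 4, DifferentiableAt ℝ (fun q => F q i j) p :=
    fun i j => ((hFC1 i j).contDiffAt (hD.mem_nhds hp)).differentiableAt one_ne_zero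
  have hμd : DifferentiableAt ℝ μ p :=
    (hμ.contDiffAt (hD.mem_nhds hp)).differentiableAt (by simp)
  have hsd : DifferentiableAt ℝ sf p := (hμd.abs hμp).sqrt (by positivity)
  have hinvd : DifferentiableAt ℝ (fun q => (sf q)⁻¹) p := hsd.inv hs_ne
  -- rows componentwise derivatives
  have hrow_pu : ∀ i : Fin 4, pu (fun q => F q i) p = fun j => (A p * F p) i j := by
    intro i
    show fderiv ℝ (fun q => F q i) p (1, 0) = _
    rw [fderiv_pi (fun j => hdiffF i j)]
    funext j
    exact hFu p hp i j
  have hrow_pv : ∀ i : Fin 4, pv (fun q => F q i) p = fun j => (B p * F p) i j := by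
    intro i
    show fderiv ℝ (fun q => F q i) p (0, 1) = _
    rw [fderiv_pi (fun j => hdiffF i j)]
    funext j
    exact hFv p hp i j
  -- part 1,2,3
  have h1 : mink (pu z p) (pu z p) = 0 := by
    rw [hzu p hp, mink_smul_smul, gxx, mul_zero]
  have h2 : mink (pv z p) (pv z p) = 0 := by
    rw [hzv p hp, mink_smul_smul, gyy, mul_zero]
  have h3 : mink (pu z p) (pv z p) = -(1 / |μ p|) := by
    rw [hzu p hp, hzv p hp, mink_smul_smul, gxy]
    rw [← hs_sq]; field_simp; rw [Real.sqrt_sq hs_pos.le]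
  -- z_uv
  have hEq : pu z =ᶠ[nhds p] fun q => (sf q)⁻¹ • F q 0 := by
    filter_upwards [hD.mem_nhds hp] with q hq
    rw [hzu q hq, hxrow]
  have hpvs : pv sf p = -γ₂ p := by rw [hγ₂ p hp]; ring
  have hinv_pv : pv (fun q => (sf q)⁻¹) p = (sf p ^ 2)⁻¹ * γ₂ p := by
    have hc : HasFDerivAt (fun q => (sf q)⁻¹)
        ((ContinuousLinearMap.smulRight (1 : ℝ →L[ℝ] ℝ) (-(sf p ^ 2)⁻¹)).comp
          (fderiv ℝ sf p)) p := (hasFDerivAt_inv hs_ne).comp p hsd.hasFDerivAt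
    show fderiv ℝ (fun q => (sf q)⁻¹) p (0, 1) = _
    rw [hc.fderiv]
    have h2 : fderiv ℝ sf p (0, 1) = -γ₂ p := hpvs
    simp [h2]
    ring
  have h4 : pv (pu z) p = (-(ν p / |μ p|)) • n₁ p := by
    have hfe : fderiv ℝ (pu z) p = fderiv ℝ (fun q => (sf q)⁻¹ • F q 0) p :=
      hEq.fderiv_eq
    show fderiv ℝ (pu z) p (0, 1) = _
    rw [hfe]
    have hdcomp : ∀ j : Fin 4, DifferentiableAt ℝ (fun q => (sf q)⁻¹ * F q 0 j) p :=
      fun j => hinvd.mul (hdiffF 0 j)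
    have hpi : fderiv ℝ (fun q => (sf q)⁻¹ • F q 0) p =
        ContinuousLinearMap.pi fun j => fderiv ℝ (fun q => (sf q)⁻¹ * F q 0 j) p := by
      exact fderiv_pi (fun j => hdcomp j)
    rw [hpi]
    funext j
    have hmul : fderiv ℝ (fun q => (sf q)⁻¹ * F q 0 j) p =
        (sf p)⁻¹ • fderiv ℝ (fun q => F q 0 j) p
          + F p 0 j • fderiv ℝ (fun q => (sf q)⁻¹) p := fderiv_mul hinvd (hdiffF 0 j)
    have hval : fderiv ℝ (fun q => (sf q)⁻¹ * F q 0 j) p (0, 1) =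
        (sf p)⁻¹ * (B p * F p) 0 j + F p 0 j * ((sf p ^ 2)⁻¹ * γ₂ p) := by
      rw [hmul]
      have h1' : fderiv ℝ (fun q => F q 0 j) p (0, 1) = (B p * F p) 0 j := hFv p hp 0 j
      have h2' : fderiv ℝ (fun q => (sf q)⁻¹) p (0, 1) = (sf p ^ 2)⁻¹ * γ₂ p := hinv_pv
      simp [h1', h2']
    show fderiv ℝ (fun q => (sf q)⁻¹ * F q 0 j) p (0, 1) = _
    rw [hval]
    have hBF : (B p * F p) 0 j = (sf p)⁻¹ * (-γ₂ p * F p 0 j + -ν p * F p 2 j) := by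
      rw [hB p hp]
      simp [Matrix.mul_apply, Fin.sum_univ_four]
      ring
    rw [hBF, hn₁row]
    have : (-(ν p / |μ p|)) • F p 2 = fun j => -(ν p / |μ p|) * F p 2 j := rfl
    rw [this]
    rw [← hs_sq]
    field_simp
    ring
  -- mean curvature
  have h5 : -(mink (|μ p| • pv (pu z) p) (n₁ p) • n₁ p
          + mink (|μ p| • pv (pu z) p) (n₂ p) • n₂ p) = ν p • n₁ p := by
    have hc : |μ p| * -(ν p / |μ p|) = -ν p := by field_simp
    rw [h4, smul_smul, mink_smul_left, mink_smul_left, gn11, gn12, mul_one, mul_zero,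
      zero_smul, add_zero, hc, neg_smul, neg_neg]
  -- parallel normal field
  have hn1fun : n₁ = fun q => F q 2 := funext hn₁row
  have h6 : mink (pu n₁ p) (n₂ p) = 0 := by
    rw [hn1fun, hrow_pu 2, hn₂row]
    have e1 : ∀ j : Fin 4, (A p * F p) 2 j = (sf p)⁻¹ * (-ν p * F p 0 j + lam p * F p 1 j) := by
      intro j
      rw [hA p hp]
      simp [Matrix.mul_apply, Fin.sum_univ_four]
      ring
    have gx3 : mink (F p 0) (F p 3) = 0 := by rw [gram 0 3, hG₀]; norm_num; rfl
    have gy3 : mink (F p 1) (F p 3) = 0 := by rw [gram 1 3, hG₀]; norm_num; rfl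
    simp only [mink] at gx3 gy3 ⊢
    rw [e1 0, e1 1, e1 2, e1 3]
    linear_combination (sf p)⁻¹ * (-ν p) * gx3 + (sf p)⁻¹ * lam p * gy3
  have h7 : mink (pv n₁ p) (n₂ p) = 0 := by
    rw [hn1fun, hrow_pv 2, hn₂row]
    have e1 : ∀ j : Fin 4, (B p * F p) 2 j
        = (sf p)⁻¹ * (-ε * lam p * F p 0 j + -ν p * F p 1 j) := by
      intro j
      rw [hB p hp]
      simp [Matrix.mul_apply, Fin.sum_univ_four]
      ring
    have gx3 : mink (F p 0) (F p 3) = 0 := by rw [gram 0 3, hG₀]; norm_num; rfl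
    have gy3 : mink (F p 1) (F p 3) = 0 := by rw [gram 1 3, hG₀]; norm_num; rfl
    simp only [mink] at gx3 gy3 ⊢
    rw [e1 0, e1 1, e1 2, e1 3]
    linear_combination (sf p)⁻¹ * (-ε * lam p) * gx3 + (sf p)⁻¹ * (-ν p) * gy3
  exact ⟨h1, h2, h3, h4, h5, h6, h7⟩
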